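/- arXiv:2403.07706 — 4 statements merged into one kernel-verified Lean document; each statement's English description precedes it below -/
import Mathlib

section
/- Let N and F be positive natural numbers and let M : Fin N → Fin F → ℝ be such that for each k : Fin F there is a strict columnwise maximizer j_k (M j_k k > M j k for all j ≠ j_k). Then the max-pooling map g, defined by g M' k = max over i of M' i k, is Fréchet differentiable at M, and its derivative is the continuous linear map sending a direction H : Fin N → Fin F → ℝ to the function k ↦ H j_k k. In particular the derivative of the k-th pooled output with respect to the entry (i, k') is 1 if i = j_k and k' = k, and 0 otherwise. -/
/-- Fréchet differentiability of the Max-Pooling map at a matrix with strict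
columnwise maximizers: the derivative is the continuous linear map
`H ↦ fun k => H (j k) k`, i.e. the stack of coordinate vectors
`δ_{(k−1)·N + j_k}`.  In particular, the derivative of the `k`-th pooled
output with respect to the entry `(i, k')` is `1` if `i = j k ∧ k' = k` and
`0` otherwise. -/
theorem maxpool_hasFDerivAt (N F : ℕ) (hN : 0 < N) (hF : 0 < F)
    (M : Fin N → Fin F → ℝ) (j : Fin F → Fin N)
    (hmax : ∀ k : Fin F, ∀ i : Fin N, i ≠ j k → M (j k) k > M i k) :
    HasFDerivAt
      (fun M' : Fin N → Fin F → ℝ => fun k : Fin F =>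
        Finset.univ.sup' (Finset.univ_nonempty_iff.mpr ⟨⟨0, hN⟩⟩)
          (fun i => M' i k))
      (ContinuousLinearMap.pi fun k : Fin F =>
        (ContinuousLinearMap.proj (R := ℝ) (φ := fun _ : Fin F => ℝ) k).comp
          (ContinuousLinearMap.proj (R := ℝ)
            (φ := fun _ : Fin N => Fin F → ℝ) (j k))) M
    ∧
    ∀ (i : Fin N) (k' k : Fin F),
      (ContinuousLinearMap.pi fun k : Fin F =>
        (ContinuousLinearMap.proj (R := ℝ) (φ := fun _ : Fin F => ℝ) k).comp
          (ContinuousLinearMap.proj (R := ℝ)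
            (φ := fun _ : Fin N => Fin F → ℝ) (j k)))
        (fun a b => if a = i ∧ b = k' then (1 : ℝ) else 0) k
        = if i = j k ∧ k' = k then (1 : ℝ) else 0 := by
  set L : (Fin N → Fin F → ℝ) →L[ℝ] (Fin F → ℝ) :=
    ContinuousLinearMap.pi fun k : Fin F =>
      (ContinuousLinearMap.proj (R := ℝ) (φ := fun _ : Fin F => ℝ) k).comp
        (ContinuousLinearMap.proj (R := ℝ)
          (φ := fun _ : Fin N => Fin F → ℝ) (j k)) with hL
  constructor
  · have hlin : HasFDerivAt (fun M' : Fin N → Fin F → ℝ => L M') L M :=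
      L.hasFDerivAt
    apply hlin.congr_of_eventuallyEq
    have hopen : IsOpen {M' : Fin N → Fin F → ℝ |
        ∀ k i, i ≠ j k → M' i k < M' (j k) k} := by
      have : {M' : Fin N → Fin F → ℝ | ∀ k i, i ≠ j k → M' i k < M' (j k) k}
          = ⋂ p : {p : Fin F × Fin N // p.2 ≠ j p.1},
            {M' | M' p.1.2 p.1.1 < M' (j p.1.1) p.1.1} := by
        ext M'
        simp only [Set.mem_iInter, Set.mem_setOf_eq]
        exact ⟨fun h p => h p.1.1 p.1.2 p.2, fun h k i hi => h ⟨(k, i), hi⟩⟩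
      rw [this]
      refine isOpen_iInter_of_finite fun p => ?_
      exact isOpen_lt (by continuity) (by continuity)
    have hmem : M ∈ {M' : Fin N → Fin F → ℝ |
        ∀ k i, i ≠ j k → M' i k < M' (j k) k} := fun k i hi => hmax k i hi
    filter_upwards [hopen.mem_nhds hmem] with M' hM'
    funext k
    show _ = M' (j k) k
    refine le_antisymm (Finset.sup'_le _ _ fun i _ => ?_)
      (Finset.le_sup' (fun i => M' i k) (Finset.mem_univ (j k)))
    rcases eq_or_ne i (j k) with rfl | hne
    · exact le_rfl
    · exact (hM' k i hne).le
  · intro i k' k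
    simp only [hL, ContinuousLinearMap.pi_apply, ContinuousLinearMap.comp_apply,
      ContinuousLinearMap.proj_apply]
    by_cases h1 : i = j k <;> by_cases h2 : k' = k <;>
      simp [h1, h2, eq_comm]
end

section
/- Let D, F, N be positive natural numbers with N > F. Let X : Fin N → (Fin D → ℝ) be a point cloud and let φ : Fin N → ((Fin D → ℝ) → (Fin F → ℝ)) be per-point feature maps with each φ i continuous at X i. Define the feature matrix M : Fin N → Fin F → ℝ by M j k = φ j (X j) k, and suppose that for each k : Fin F there is a strict columnwise maximizer j_k (M j_k k > M j k for all j ≠ j_k). Then there is a finite set S ⊆ Fin N with card S ≥ N − F such that for every i ∈ S and every function h : (Fin F → ℝ) → (Fin C → ℝ), the prediction map x ↦ h (g (fun j => if j = i then φ i x else M j)) (the network output as a function of the position of point i, all other points fixed) is constant on a neighborhood of X i; in particular it has Fréchet derivative 0 at X i. -/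
/-- The max-pooling map: `g M k` is the maximum over points `i` of `M i k`. -/
noncomputable def maxPool {N F : ℕ} (hN : 0 < N) (M : Fin N → Fin F → ℝ) :
    Fin F → ℝ :=
  fun k => Finset.univ.sup' (Finset.univ_nonempty_iff.mpr ⟨⟨0, hN⟩⟩)
    (fun i => M i k)

/-- Proposition 1 (Existence of zero gradients).  In a PointNet-style
architecture (each point featurized independently by `φ i`, continuous at
`X i`, followed by Max-Pooling and an arbitrary head `h`), if `N > F` and each
feature column has a strict maximizer, then there are at least `N − F` points
`i` such that the network prediction, as a function of the position of point
`i` (all other points fixed), is locally constant around `X i`; in particular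
its Fréchet derivative there is `0`. -/
theorem exists_zero_gradients (D F N C : ℕ) (hD : 0 < D) (hF : 0 < F)
    (hNF : N > F) (hC : 0 < C)
    (X : Fin N → (Fin D → ℝ))
    (φ : Fin N → ((Fin D → ℝ) → (Fin F → ℝ)))
    (hcont : ∀ i : Fin N, ContinuousAt (φ i) (X i))
    (M : Fin N → Fin F → ℝ)
    (hM : ∀ (i : Fin N) (k : Fin F), M i k = φ i (X i) k)
    (j : Fin F → Fin N)
    (hmax : ∀ k : Fin F, ∀ i : Fin N, i ≠ j k → M (j k) k > M i k) :
    ∃ S : Finset (Fin N), N - F ≤ S.card ∧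
      ∀ i ∈ S, ∀ h : (Fin F → ℝ) → (Fin C → ℝ),
        (∃ U ∈ nhds (X i), ∀ x ∈ U,
          h (maxPool (lt_of_le_of_lt (Nat.zero_le F) hNF)
              (fun a => if a = i then φ i x else M a))
            = h (maxPool (lt_of_le_of_lt (Nat.zero_le F) hNF)
              (fun a => if a = i then φ i (X i) else M a))) ∧
        HasFDerivAt
          (fun x : Fin D → ℝ =>
            h (maxPool (lt_of_le_of_lt (Nat.zero_le F) hNF)
              (fun a => if a = i then φ i x else M a)))
          (0 : (Fin D → ℝ) →L[ℝ] (Fin C → ℝ)) (X i) := by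
  classical
  have hN : 0 < N := lt_of_le_of_lt (Nat.zero_le F) hNF
  refine ⟨Finset.univ \ Finset.image j Finset.univ, ?_, ?_⟩
  · have h1 : (Finset.image j Finset.univ).card ≤ F := by
      calc (Finset.image j Finset.univ).card ≤ (Finset.univ : Finset (Fin F)).card :=
            Finset.card_image_le
        _ = F := by simp
    rw [Finset.card_sdiff_of_subset (Finset.subset_univ _), Finset.card_univ, Fintype.card_fin]
    omega
  · intro i hi h
    have hi' : ∀ k, j k ≠ i := by
      simp only [Finset.mem_sdiff, Finset.mem_univ, true_and, Finset.mem_image,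
        not_exists] at hi
      intro k hk
      exact hi k hk
    have hlt : ∀ k, φ i (X i) k < M (j k) k := by
      intro k
      rw [← hM]
      exact hmax k i (fun e => hi' k e.symm)
    -- The open set of feature vectors strictly below the max in every column
    set V : Set (Fin F → ℝ) := {y | ∀ k, y k < M (j k) k} with hV
    have hVopen : IsOpen V := by
      have : V = ⋂ k, {y : Fin F → ℝ | y k < M (j k) k} := by
        ext y; simp [hV]
      rw [this]
      exact isOpen_iInter_of_finite fun k =>
        isOpen_lt (continuous_apply k) continuous_const
    have hVmem : V ∈ nhds (φ i (X i)) := hVopen.mem_nhds (fun k => hlt k)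
    have hU : (φ i) ⁻¹' V ∈ nhds (X i) := hcont i hVmem
    -- Key: for features in V, the pooled vector is fun k => M (j k) k
    have key : ∀ y ∈ V,
        maxPool hN (fun a => if a = i then y else M a) = fun k => M (j k) k := by
      intro y hy
      funext k
      apply le_antisymm
      · apply Finset.sup'_le
        intro a _
        by_cases ha : a = i
        · simp only [ha, if_pos rfl]
          exact le_of_lt (hy k)
        · simp only [if_neg ha]
          by_cases haj : a = j k
          · rw [haj]
          · exact le_of_lt (hmax k a haj)
      · calc M (j k) k = (fun a => (if a = i then y else M a) k) (j k) := by
              simp [hi' k]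
          _ ≤ _ := by
              unfold maxPool
              exact Finset.le_sup' (fun a => (if a = i then y else M a) k) (Finset.mem_univ (j k))
    have hXiV : φ i (X i) ∈ V := fun k => hlt k
    have hconst : ∀ x ∈ (φ i) ⁻¹' V,
        h (maxPool hN (fun a => if a = i then φ i x else M a))
          = h (maxPool hN (fun a => if a = i then φ i (X i) else M a)) := by
      intro x hx
      rw [key _ hx, key _ hXiV]
    refine ⟨⟨(φ i) ⁻¹' V, hU, hconst⟩, ?_⟩
    have heq : (fun x : Fin D → ℝ =>
        h (maxPool hN (fun a => if a = i then φ i x else M a)))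
        =ᶠ[nhds (X i)]
        (fun _ => h (maxPool hN (fun a => if a = i then φ i (X i) else M a))) :=
      Filter.eventuallyEq_of_mem hU hconst
    exact (hasFDerivAt_const _ _).congr_of_eventuallyEq heq
end

section
/- Let N be a positive natural number, (P, dist) a metric space, X : Fin N → P a point cloud, and G a connected simple graph on Fin N. Let h > 0 satisfy dist (X i) (X j) ≤ h for all i j with G.Adj i j. Let c : Fin N → ℝ take values in {0, 1} and attain both values (∃ i, c i = 0 and ∃ j, c j = 1). If K : ℝ satisfies |c i − c j| ≤ K * dist (X i) (X j) for all i j : Fin N, then K ≥ 1 / h. -/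
lemma walk_exists_adj_ne {V : Type*} {G : SimpleGraph V} {c : V → ℝ} :
    ∀ {u v : V}, G.Walk u v → c u ≠ c v → ∃ i j, G.Adj i j ∧ c i ≠ c j := by
  intro u v w
  induction w with
  | nil => intro h; exact absurd rfl h
  | @cons a b d hab p ih =>
    intro h
    by_cases hc : c a = c b
    · exact ih (hc ▸ h)
    · exact ⟨a, b, hab, hc⟩

/-- Core of Proposition 2 (Smoothness): any `{0,1}`-valued influence measure
`c` that attains both values on a point cloud `X` whose connected graph `G`
has all edge lengths at most `h` can be `K`-Lipschitz (w.r.t. positions) only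
for `K ≥ 1/h`. -/
theorem lipschitz_const_ge_inv_h (N : ℕ) (hN : 0 < N) {P : Type*}
    [MetricSpace P] (X : Fin N → P) (G : SimpleGraph (Fin N))
    (hG : G.Connected) (h : ℝ) (hh : 0 < h)
    (hedge : ∀ i j : Fin N, G.Adj i j → dist (X i) (X j) ≤ h)
    (c : Fin N → ℝ) (hc01 : ∀ i, c i = 0 ∨ c i = 1)
    (h0 : ∃ i, c i = 0) (h1 : ∃ j, c j = 1)
    (K : ℝ) (hK : ∀ i j : Fin N, |c i - c j| ≤ K * dist (X i) (X j)) :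
    K ≥ 1 / h := by
  obtain ⟨i0, hi0⟩ := h0
  obtain ⟨j1, hj1⟩ := h1
  have hne : c i0 ≠ c j1 := by rw [hi0, hj1]; norm_num
  obtain ⟨i, j, hadj, hcij⟩ := walk_exists_adj_ne (hG i0 j1).some hne
  have h1' : |c i - c j| = 1 := by
    rcases hc01 i with hi | hi <;> rcases hc01 j with hj | hj <;>
      simp_all <;> norm_num
  have hd := hK i j
  rw [h1'] at hd
  have hK0 : 0 ≤ K := by
    by_contra hneg
    push_neg at hneg
    nlinarith [dist_nonneg (x := X i) (y := X j)]
  have : 1 ≤ K * h := le_trans hd (by nlinarith [hedge i j hadj, dist_nonneg (x := X i) (y := X j)])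
  rw [ge_iff_le, div_le_iff₀ hh]
  linarith
end

section
/- Let N and F be natural numbers with N > F ≥ 1. Let X : Fin N → (Fin D → ℝ) be a point cloud in D-dimensional Euclidean space (with the Euclidean distance), and let M : Fin N → Fin F → ℝ be a feature matrix such that for each k : Fin F there is a strict columnwise maximizer j_k (M j_k k > M j k for all j ≠ j_k). Define CP : Fin N → ℝ by CP i = 1 if i ∈ S_C(M) = {i | ∃ k, ∀ j ≠ i, M i k > M j k} and CP i = 0 otherwise. Let G be a connected simple graph on Fin N and h > 0 with dist (X i) (X j) ≤ h whenever G.Adj i j. If K : ℝ satisfies |CP i − CP j| ≤ K * dist (X i) (X j) for all i j : Fin N, then K ≥ 1 / h. -/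
open Classical in
lemma crossing_edge_of_walk {V : Type*} {G : SimpleGraph V} (S : Set V) :
    ∀ {u v : V} (w : G.Walk u v), u ∈ S → v ∉ S →
      ∃ x y, G.Adj x y ∧ x ∈ S ∧ y ∉ S := by
  intro u v w
  induction w with
  | nil => intro hu hv; exact absurd hu hv
  | cons hadj w ih =>
      intro hu hv
      rename_i a b c
      by_cases hb : b ∈ S
      · exact ih hb hv
      · exact ⟨a, b, hadj, hu, hb⟩

open Classical in
/-- Proposition 2 (Smoothness), in full.  Let `M` be a feature matrix on a
point cloud `X` in Euclidean space with a strict columnwise maximizer in each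
of its `F ≥ 1` columns, with `N > F` points.  The Critical-Points indicator
`CP` (equal to `1` on the critical set `{i | ∃ k, ∀ l ≠ i, M i k > M l k}` and
`0` elsewhere) can be `K`-Lipschitz w.r.t. positions, on a connected graph `G`
with all edge lengths at most `h > 0`, only for `K ≥ 1/h`. -/
theorem criticalPoints_lipschitz_const_ge_inv_h (N F D : ℕ)
    (hNF : N > F) (hF : 1 ≤ F)
    (X : Fin N → EuclideanSpace ℝ (Fin D))
    (M : Fin N → Fin F → ℝ)
    (j : Fin F → Fin N)
    (hmax : ∀ k : Fin F, ∀ i : Fin N, i ≠ j k → M (j k) k > M i k)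
    (CP : Fin N → ℝ)
    (hCP : ∀ i : Fin N,
      CP i = if ∃ k : Fin F, ∀ l : Fin N, l ≠ i → M i k > M l k then 1 else 0)
    (G : SimpleGraph (Fin N)) (hG : G.Connected)
    (h : ℝ) (hh : 0 < h)
    (hedge : ∀ i l : Fin N, G.Adj i l → dist (X i) (X l) ≤ h)
    (K : ℝ) (hK : ∀ i l : Fin N, |CP i - CP l| ≤ K * dist (X i) (X l)) :
    K ≥ 1 / h := by
  classical
  set S : Set (Fin N) := {i | ∃ k : Fin F, ∀ l : Fin N, l ≠ i → M i k > M l k}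
    with hS
  -- S is contained in the range of j
  have hsub : S ⊆ Set.range j := by
    rintro i ⟨k, hk⟩
    refine ⟨k, ?_⟩
    by_contra hne
    have hne' : i ≠ j k := fun h' => hne h'.symm
    exact absurd (hk (j k) (Ne.symm hne')) (not_lt.mpr (le_of_lt (hmax k i hne')))
  -- so there is a non-critical point
  have hcard : (Set.range j).toFinset.card ≤ F := by
    rw [Set.toFinset_range]
    simpa using Finset.card_image_le (s := Finset.univ) (f := j)
  have hex : ∃ i0 : Fin N, i0 ∉ S := by
    by_contra hc
    push_neg at hc
    have : (Finset.univ : Finset (Fin N)).card ≤ (Set.range j).toFinset.card := by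
      apply Finset.card_le_card
      intro i _
      simpa using hsub (hc i)
    simp only [Finset.card_univ, Fintype.card_fin] at this
    omega
  obtain ⟨i0, hi0⟩ := hex
  -- a critical point
  have hk0 : F ≠ 0 := by omega
  have hj0 : j ⟨0, by omega⟩ ∈ S := ⟨⟨0, by omega⟩, fun l hl => hmax _ l hl⟩
  -- crossing edge
  obtain ⟨x, y, hadj, hx, hy⟩ :=
    crossing_edge_of_walk S ((hG (j ⟨0, by omega⟩) i0).some) hj0 hi0
  have hx' : ∃ k : Fin F, ∀ l : Fin N, l ≠ x → M x k > M l k := hx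
  have hCPx : CP x = 1 := by rw [hCP]; exact if_pos hx'
  have hy' : ¬ ∃ k : Fin F, ∀ l : Fin N, l ≠ y → M y k > M l k := hy
  have hCPy : CP y = 0 := by rw [hCP]; exact if_neg hy'
  have h1 : (1 : ℝ) ≤ K * dist (X x) (X y) := by
    have := hK x y
    rw [hCPx, hCPy] at this
    simpa using this
  have hd : dist (X x) (X y) ≤ h := hedge x y hadj
  have hK0 : 0 < K := by
    by_contra hc
    push_neg at hc
    have : K * dist (X x) (X y) ≤ 0 :=
      mul_nonpos_of_nonpos_of_nonneg hc dist_nonneg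
    linarith
  have : K * dist (X x) (X y) ≤ K * h := by
    exact mul_le_mul_of_nonneg_left hd hK0.le
  rw [ge_iff_le, div_le_iff₀ hh]
  linarith
end
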